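/- arXiv:math/0612732 — 3 statements merged into one kernel-verified Lean document; each statement's English description precedes it below -/
import Mathlib

section
/- For every real number x, the polynomial -3x^4 + 26x^3 - 53x^2 - 26x - 3 is strictly negative; consequently, the curve y^2 = -3x^4 + 26x^3 - 53x^2 - 26x - 3 has no real points, and in particular no rational points. -/
lemma key (x : ℝ) : -3*x^4 + 26*x^3 - 53*x^2 - 26*x - 3 < 0 := by
  nlinarith [sq_nonneg (x^2 - 5*x - 1), sq_nonneg (x^2 - 4*x - 1), sq_nonneg (x^2 - 1), sq_nonneg (x+1), sq_nonneg (x-1), sq_nonneg x, sq_nonneg (x^2-4*x+1)]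

theorem stmt_1 :
    (∀ x : ℝ, -3*x^4 + 26*x^3 - 53*x^2 - 26*x - 3 < 0) ∧
    (¬ ∃ x y : ℝ, y^2 = -3*x^4 + 26*x^3 - 53*x^2 - 26*x - 3) ∧
    (¬ ∃ x y : ℚ, y^2 = -3*x^4 + 26*x^3 - 53*x^2 - 26*x - 3) := by
  refine ⟨key, ?_, ?_⟩
  · rintro ⟨x, y, h⟩
    exact absurd (h ▸ sq_nonneg y) (not_le.2 (key x))
  · rintro ⟨x, y, h⟩
    have h' : ((y:ℝ))^2 = -3*(x:ℝ)^4 + 26*(x:ℝ)^3 - 53*(x:ℝ)^2 - 26*(x:ℝ) - 3 := by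
      exact_mod_cast congrArg (Rat.cast : ℚ → ℝ) h
    exact absurd (h' ▸ sq_nonneg (y:ℝ)) (not_le.2 (key x))
end

section
/- For every real number x, the polynomial -27x^4 - 40x^3 + 6x^2 + 40x - 27 is strictly negative; hence the curve y^2 = -27x^4 - 40x^3 + 6x^2 + 40x - 27 has no real points. -/
theorem stmt_2 :
    (∀ x : ℝ, -27*x^4 - 40*x^3 + 6*x^2 + 40*x - 27 < 0) ∧
    ¬ ∃ x y : ℝ, y^2 = -27*x^4 - 40*x^3 + 6*x^2 + 40*x - 27 := by
  have h : ∀ x : ℝ, -27*x^4 - 40*x^3 + 6*x^2 + 40*x - 27 < 0 := by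
    intro x
    nlinarith [sq_nonneg (x^2+x), sq_nonneg (x^2-1), sq_nonneg (x^2+x-1), sq_nonneg (x^2-x), sq_nonneg (x*x-1), sq_nonneg x, sq_nonneg (x+1), sq_nonneg (x-1)]
  refine ⟨h, ?_⟩
  rintro ⟨x, y, hy⟩
  nlinarith [h x, sq_nonneg y]
end

section
/- Suppose rational numbers x with x^2 ≠ 1 and y satisfy -3y^2 = x^4 + (136/27)x^3 + (122/27)x^2 - (136/27)x + 1. Then u = -2x/(x^2-1), w = -(1+x^2)/(x^2-1), z = 9y/(x^2-1) satisfy the two equations z^2 + 44u^2 - 68u + 27 = 0 and w^2 - (u^2 + 1) = 0. -/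
/-!
Clearing the common denominator `(x^2 - 1)^2`, the first equation becomes `-27` times the quartic
relation, and the second is the rational parametrization of the hyperbola `w^2 = u^2 + 1` by the
lines `u = x (w + 1)` through `(u, w) = (0, -1)`.
-/

theorem hyperbola_param_sq_sub_sq {K : Type*} [Field K] {x : K} (hx : x^2 ≠ 1) :
    (-(1+x^2)/(x^2-1))^2 - ((-2*x/(x^2-1))^2 + 1) = 0 := by
  have hd : x^2 - 1 ≠ 0 := sub_ne_zero.mpr hx
  field_simp
  ring

theorem stmt_9 (x y : ℚ) (hx : x^2 ≠ 1)
    (h : -3*y^2 = x^4 + (136/27)*x^3 + (122/27)*x^2 - (136/27)*x + 1) :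
    (9*y/(x^2-1))^2 + 44*(-2*x/(x^2-1))^2 - 68*(-2*x/(x^2-1)) + 27 = 0 ∧
    (-(1+x^2)/(x^2-1))^2 - ((-2*x/(x^2-1))^2 + 1) = 0 := by
  refine ⟨?_, hyperbola_param_sq_sub_sq hx⟩
  have hd : x^2 - 1 ≠ 0 := sub_ne_zero.mpr hx
  field_simp
  linear_combination (-27) * h
end
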